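/- The rotated-Q1 IFE coefficient system is a nonsingular linear system: for every β⁻, β⁺ > 0 and d, e ∈ (0,1), the linear map from ℝ⁸ to ℝ⁸ sending the combined coefficient vector (c⁻, c⁺) ∈ ℝ⁴ × ℝ⁴ to the 8-tuple consisting of (i) the four edge-mean degrees of freedom of the associated piecewise rotated-Q1 function φ, (ii) the two point-continuity defects p⁺(D) − p⁻(D) and p⁺(E) − p⁻(E), (iii) the coefficient defect c₄⁺ − c₄⁻, and (iv) the flux defect ∫₀¹ (β⁺∇p⁺ − β⁻∇p⁻)((1−t)d + t e, t) · (1, d − e) dt, is a linear bijection of ℝ⁸ (equivalently, the 8×8 coefficient matrix M_c of the system is nonsingular). -/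

import Mathlib

/-!
The jump conditions force `p⁺ - p⁻ = κ (x - d - (e - d) y)` for a single scalar `κ`. Zero edge
means of `φ` then fix the edge means of `p⁻` as multiples of `κ`, and with them the flux of `∇p⁻`
through `DE`: the flux defect becomes `κ (β⁺ W(1 - d, 1 - e) + β⁻ W(d, e)) / 4` with `W > 0` on
`(0,1)²`. Hence `κ = 0`, so `p⁻ = p⁺` has zero edge means and vanishes, the rotated-Q1 element
being unisolvent for edge means. A linear map `ℝ⁸ → ℝ⁸` with trivial kernel is bijective.
-/

open MeasureTheory Set

noncomputable section

/-- The rotated-Q1 polynomial `c₁ + c₂ x + c₃ y + c₄ (x² − y²)` with coefficient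
vector `c = (c 0, c 1, c 2, c 3)`. -/
def rq1 (c : Fin 4 → ℝ) (x y : ℝ) : ℝ :=
  c 0 + c 1 * x + c 2 * y + c 3 * (x ^ 2 - y ^ 2)

/-- The piecewise rotated-Q1 function on the reference Type II interface element:
`p⁻` where `x ≤ d + (e − d) y`, `p⁺` elsewhere. -/
def phiFn (d e : ℝ) (cm cp : Fin 4 → ℝ) (x y : ℝ) : ℝ :=
  if x ≤ d + (e - d) * y then rq1 cm x y else rq1 cp x y

/-- Jump condition (J1): continuity at the interface points `D = (d,0)` and `E = (e,1)`. -/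
def J1 (d e : ℝ) (cm cp : Fin 4 → ℝ) : Prop :=
  rq1 cm d 0 = rq1 cp d 0 ∧ rq1 cm e 1 = rq1 cp e 1

/-- Jump condition (J2): matching of the `x² − y²` coefficients. -/
def J2 (cm cp : Fin 4 → ℝ) : Prop := cm 3 = cp 3

/-- The flux defect `∫₀¹ (β⁺∇p⁺ − β⁻∇p⁻)((1−t)d + te, t) · (1, d − e) dt`. -/
def fluxDefect (βm βp d e : ℝ) (cm cp : Fin 4 → ℝ) : ℝ :=
  ∫ t in (0:ℝ)..1,
    ((βp * (cp 1 + 2 * cp 3 * ((1 - t) * d + t * e))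
        - βm * (cm 1 + 2 * cm 3 * ((1 - t) * d + t * e))) * 1
      + (βp * (cp 2 - 2 * cp 3 * t) - βm * (cm 2 - 2 * cm 3 * t)) * (d - e))

/-- Jump condition (J3): the integral over `DE` of the jump of the normal flux vanishes. -/
def J3 (βm βp d e : ℝ) (cm cp : Fin 4 → ℝ) : Prop :=
  fluxDefect βm βp d e cm cp = 0

/-- The four edge-mean (integral-value) degrees of freedom of `φ`:
bottom, right, top, left edges of `T = [0,1]²`. -/
def dofI (d e : ℝ) (cm cp : Fin 4 → ℝ) : Fin 4 → ℝ :=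
  ![(∫ x in (0:ℝ)..d, rq1 cm x 0) + ∫ x in d..(1:ℝ), rq1 cp x 0,
    ∫ y in (0:ℝ)..1, rq1 cp 1 y,
    (∫ x in (0:ℝ)..e, rq1 cm x 1) + ∫ x in e..(1:ℝ), rq1 cp x 1,
    ∫ y in (0:ℝ)..1, rq1 cm 0 y]

/-- The four midpoint-value degrees of freedom of `φ`:
values at the midpoints of the bottom, right, top, left edges of `T = [0,1]²`. -/
def dofP (d e : ℝ) (cm cp : Fin 4 → ℝ) : Fin 4 → ℝ :=
  ![phiFn d e cm cp (1/2) 0, phiFn d e cm cp 1 (1/2),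
    phiFn d e cm cp (1/2) 1, phiFn d e cm cp 0 (1/2)]

/-- The partial derivative `∂ₓᵃ∂ᵧᵇ` of the rotated-Q1 polynomial with coefficients `c`. -/
def rq1D (c : Fin 4 → ℝ) : ℕ → ℕ → ℝ → ℝ → ℝ
  | 0, 0, x, y => rq1 c x y
  | 1, 0, x, _ => c 1 + 2 * c 3 * x
  | 0, 1, _, y => c 2 - 2 * c 3 * y
  | 2, 0, _, _ => 2 * c 3
  | 1, 1, _, _ => 0
  | 0, 2, _, _ => -(2 * c 3)
  | _, _, _, _ => 0

lemma integral_quadratic (p q r a b : ℝ) :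
    ∫ x in a..b, (p + q * x + r * x ^ 2) =
      p * (b - a) + q * (b ^ 2 - a ^ 2) / 2 + r * (b ^ 3 - a ^ 3) / 3 := by
  have integrable {f : ℝ → ℝ} (hf : Continuous f) : IntervalIntegrable f volume a b :=
    hf.intervalIntegrable a b
  rw [intervalIntegral.integral_add (integrable (by fun_prop)) (integrable (by fun_prop)),
    intervalIntegral.integral_add (integrable (by fun_prop)) (integrable (by fun_prop)),
    intervalIntegral.integral_const, intervalIntegral.integral_const_mul,
    intervalIntegral.integral_const_mul, integral_id, integral_pow, smul_eq_mul]
  ring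

lemma integral_rq1_horizontal (c : Fin 4 → ℝ) (y a b : ℝ) :
    ∫ x in a..b, rq1 c x y =
      (c 0 + c 2 * y - c 3 * y ^ 2) * (b - a) + c 1 * (b ^ 2 - a ^ 2) / 2
        + c 3 * (b ^ 3 - a ^ 3) / 3 := by
  have h : (rq1 c · y) = fun x => (c 0 + c 2 * y - c 3 * y ^ 2) + c 1 * x + c 3 * x ^ 2 := by
    ext x; simp only [rq1]; ring
  rw [h, integral_quadratic]

lemma integral_rq1_vertical (c : Fin 4 → ℝ) (x a b : ℝ) :
    ∫ y in a..b, rq1 c x y =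
      (c 0 + c 1 * x + c 3 * x ^ 2) * (b - a) + c 2 * (b ^ 2 - a ^ 2) / 2
        - c 3 * (b ^ 3 - a ^ 3) / 3 := by
  have h : rq1 c x = fun y => (c 0 + c 1 * x + c 3 * x ^ 2) + c 2 * y + (-c 3) * y ^ 2 := by
    ext y; simp only [rq1]; ring
  rw [h, integral_quadratic]
  ring

lemma fluxDefect_eq (βm βp d e : ℝ) (cm cp : Fin 4 → ℝ) :
    fluxDefect βm βp d e cm cp =
      (βp * cp 1 - βm * cm 1) + (d + e) * (βp * cp 3 - βm * cm 3)
        + (d - e) * (βp * (cp 2 - cp 3) - βm * (cm 2 - cm 3)) := by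
  have h : ∀ t : ℝ,
      (βp * (cp 1 + 2 * cp 3 * ((1 - t) * d + t * e))
          - βm * (cm 1 + 2 * cm 3 * ((1 - t) * d + t * e))) * 1
        + (βp * (cp 2 - 2 * cp 3 * t) - βm * (cm 2 - 2 * cm 3 * t)) * (d - e)
      = ((βp * cp 1 - βm * cm 1) + 2 * d * (βp * cp 3 - βm * cm 3)
            + (d - e) * (βp * cp 2 - βm * cm 2))
          + 4 * (e - d) * (βp * cp 3 - βm * cm 3) * t + 0 * t ^ 2 := by
    intro t; ring
  simp only [fluxDefect, h, integral_quadratic]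
  ring

/-- Coefficients of `x - d - (e - d) y`, the affine function vanishing on the interface `DE`. -/
def kinkCoeffs (d e : ℝ) : Fin 4 → ℝ := ![-d, 1, d - e, 0]

lemma exists_eq_add_smul_kinkCoeffs {d e : ℝ} {cm cp : Fin 4 → ℝ} (h1 : J1 d e cm cp)
    (h2 : J2 cm cp) : ∃ κ : ℝ, cp = cm + κ • kinkCoeffs d e := by
  obtain ⟨hD, hE⟩ := h1
  simp only [J2, rq1] at hD hE h2
  refine ⟨cp 1 - cm 1, funext fun i => ?_⟩
  fin_cases i
  · show cp 0 = cm 0 + (cp 1 - cm 1) * -d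
    linear_combination -hD + d ^ 2 * h2
  · show cp 1 = cm 1 + (cp 1 - cm 1) * 1
    ring
  · show cp 2 = cm 2 + (cp 1 - cm 1) * (d - e)
    linear_combination hD - hE - (1 - e ^ 2 + d ^ 2) * h2
  · show cp 3 = cm 3 + (cp 1 - cm 1) * 0
    linear_combination -h2

/-- `-4 ∫_DE ∇p⁻ · (1, d - e)` for the `p⁻` whose edge means cancel those of the unit kink
`(x - d - (e - d) y)₊`. The flux of the kink itself is
`1 + (d - e) ^ 2 = (interfaceWeight d e + interfaceWeight (1 - d) (1 - e)) / 4`,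
which is why `β⁺` comes with the reflected weight. -/
def interfaceWeight (d e : ℝ) : ℝ :=
  3 * (d * (1 - d) + e * (1 - e)) * (d + e - 1) + 2 * (2 - d - e) * (1 + (d - e) ^ 2)

lemma interfaceWeight_pos {d e : ℝ} (hd : d ∈ Ioo (0:ℝ) 1) (he : e ∈ Ioo (0:ℝ) 1) :
    0 < interfaceWeight d e := by
  obtain ⟨hd0, hd1⟩ := hd
  obtain ⟨he0, he1⟩ := he
  unfold interfaceWeight
  nlinarith [mul_pos hd0 he0, mul_pos (sub_pos.mpr hd1) (sub_pos.mpr he1), sq_nonneg (d - e)]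

lemma four_mul_fluxDefect_add_smul_kinkCoeffs (βm βp : ℝ) {d e κ : ℝ} {cm : Fin 4 → ℝ}
    (h : dofI d e cm (cm + κ • kinkCoeffs d e) = 0) :
    4 * fluxDefect βm βp d e cm (cm + κ • kinkCoeffs d e) =
      κ * (βp * interfaceWeight (1 - d) (1 - e) + βm * interfaceWeight d e) := by
  simp only [dofI, Matrix.cons_eq_zero_iff, integral_rq1_horizontal, integral_rq1_vertical] at h
  obtain ⟨hB, hR, hT, hL, -⟩ := h
  rw [fluxDefect_eq, interfaceWeight, interfaceWeight]
  simp only [kinkCoeffs, Pi.add_apply, Pi.smul_apply, smul_eq_mul, Fin.isValue,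
    Matrix.cons_val_zero, Matrix.cons_val_one, Matrix.cons_val] at hB hR hT hL ⊢
  -- `∫_DE ∇p · (1, d - e)` through the edge means `m` of `p`:
  -- `m_R - m_L + 3/2 (d + e - 1) (m_R + m_L - m_T - m_B) + (d - e) (m_T - m_B)`
  linear_combination 4 * (βp - βm) *
    (hR - hL + 3 / 2 * (d + e - 1) * (hR + hL - hT - hB) + (d - e) * (hT - hB))

def edgeIntegrals (c : Fin 4 → ℝ) : Fin 4 → ℝ :=
  ![∫ x in (0:ℝ)..1, rq1 c x 0, ∫ y in (0:ℝ)..1, rq1 c 1 y,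
    ∫ x in (0:ℝ)..1, rq1 c x 1, ∫ y in (0:ℝ)..1, rq1 c 0 y]

lemma dofI_self (d e : ℝ) (c : Fin 4 → ℝ) : dofI d e c c = edgeIntegrals c := by
  have integrable (y a b : ℝ) : IntervalIntegrable (rq1 c · y) volume a b :=
    Continuous.intervalIntegrable (by unfold rq1; fun_prop) a b
  simp only [dofI, edgeIntegrals,
    intervalIntegral.integral_add_adjacent_intervals (integrable _ _ _) (integrable _ _ _)]

lemma eq_zero_of_edgeIntegrals_eq_zero {c : Fin 4 → ℝ} (h : edgeIntegrals c = 0) : c = 0 := by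
  simp only [edgeIntegrals, Matrix.cons_eq_zero_iff, integral_rq1_horizontal,
    integral_rq1_vertical] at h
  obtain ⟨hB, hR, hT, hL, -⟩ := h
  have h3 : c 3 = 0 := by linear_combination 3 / 2 * (hR + hL - hT - hB)
  funext i
  fin_cases i
  · show c 0 = 0
    linear_combination hL - (hT - hB) / 2 - h3 / 6
  · show c 1 = 0
    linear_combination hR - hL - h3
  · show c 2 = 0
    linear_combination hT - hB + h3
  · exact h3

theorem eq_zero_of_jump_conditions {βm βp d e : ℝ} (hβm : 0 < βm) (hβp : 0 < βp)
    (hd : d ∈ Ioo (0:ℝ) 1) (he : e ∈ Ioo (0:ℝ) 1) {cm cp : Fin 4 → ℝ}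
    (h1 : J1 d e cm cp) (h2 : J2 cm cp) (h3 : J3 βm βp d e cm cp) (hdof : dofI d e cm cp = 0) :
    cm = 0 ∧ cp = 0 := by
  obtain ⟨κ, rfl⟩ := exists_eq_add_smul_kinkCoeffs h1 h2
  have hκ : κ = 0 := by
    have hW : 0 < βp * interfaceWeight (1 - d) (1 - e) + βm * interfaceWeight d e := by
      have := interfaceWeight_pos hd he
      have := interfaceWeight_pos ⟨sub_pos.2 hd.2, sub_lt_self 1 hd.1⟩
        ⟨sub_pos.2 he.2, sub_lt_self 1 he.1⟩
      positivity
    have hflux := four_mul_fluxDefect_add_smul_kinkCoeffs βm βp hdof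
    rw [J3] at h3
    rw [h3, mul_zero, eq_comm, mul_eq_zero] at hflux
    exact hflux.resolve_right hW.ne'
  subst hκ
  rw [zero_smul, add_zero, dofI_self] at hdof
  have hcm := eq_zero_of_edgeIntegrals_eq_zero hdof
  exact ⟨hcm, by simp [hcm]⟩

def ifeMap (βm βp d e : ℝ) : (Fin 4 → ℝ) × (Fin 4 → ℝ) →ₗ[ℝ] Fin 8 → ℝ where
  toFun c :=
    ![dofI d e c.1 c.2 0, dofI d e c.1 c.2 1,
      dofI d e c.1 c.2 2, dofI d e c.1 c.2 3,
      rq1 c.2 d 0 - rq1 c.1 d 0, rq1 c.2 e 1 - rq1 c.1 e 1,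
      c.2 3 - c.1 3, fluxDefect βm βp d e c.1 c.2]
  map_add' u v := by
    ext i
    fin_cases i <;>
      simp only [dofI, fluxDefect_eq, integral_rq1_horizontal, integral_rq1_vertical, Prod.fst_add,
        Prod.snd_add, Pi.add_apply, Fin.zero_eta, Fin.mk_one, Fin.reduceFinMk, Fin.isValue,
        Matrix.cons_val, Matrix.cons_val_zero, Matrix.cons_val_one] <;>
      (try simp only [rq1, Pi.add_apply]) <;> ring
  map_smul' a u := by
    ext i
    fin_cases i <;>
      simp only [dofI, fluxDefect_eq, integral_rq1_horizontal, integral_rq1_vertical, Prod.smul_fst,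
        Prod.smul_snd, Pi.smul_apply, smul_eq_mul, RingHom.id_apply, Fin.zero_eta, Fin.mk_one,
        Fin.reduceFinMk, Fin.isValue, Matrix.cons_val,
        Matrix.cons_val_zero, Matrix.cons_val_one] <;>
      (try simp only [rq1, Pi.smul_apply, smul_eq_mul]) <;> ring

/-- The rotated-Q1 IFE coefficient system is nonsingular: the linear
map sending `(c⁻, c⁺) ∈ ℝ⁴ × ℝ⁴` to the four edge-mean degrees of freedom, the two
point-continuity defects at `D` and `E`, the coefficient defect `c₄⁺ − c₄⁻`, and the
flux defect, is a linear bijection of ℝ⁸. -/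
theorem ife_system_nonsingular
    (βm βp : ℝ) (hβm : 0 < βm) (hβp : 0 < βp)
    (d e : ℝ) (hd : d ∈ Ioo (0:ℝ) 1) (he : e ∈ Ioo (0:ℝ) 1) :
    Function.Bijective (fun c : (Fin 4 → ℝ) × (Fin 4 → ℝ) =>
      (![dofI d e c.1 c.2 0, dofI d e c.1 c.2 1,
         dofI d e c.1 c.2 2, dofI d e c.1 c.2 3,
         rq1 c.2 d 0 - rq1 c.1 d 0, rq1 c.2 e 1 - rq1 c.1 e 1,
         c.2 3 - c.1 3, fluxDefect βm βp d e c.1 c.2] : Fin 8 → ℝ)) := by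
  have hinj : Function.Injective (ifeMap βm βp d e) := by
    refine (injective_iff_map_eq_zero _).2 fun ⟨cm, cp⟩ hc => ?_
    simp only [ifeMap, LinearMap.coe_mk, AddHom.coe_mk, Matrix.cons_eq_zero_iff,
      sub_eq_zero] at hc
    obtain ⟨hB, hR, hT, hL, hD, hE, h4, hflux, -⟩ := hc
    have hdof : dofI d e cm cp = 0 := by
      ext i; fin_cases i <;> assumption
    obtain ⟨rfl, rfl⟩ := eq_zero_of_jump_conditions hβm hβp hd he ⟨hD.symm, hE.symm⟩ h4.symm
      hflux hdof
    rfl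
  exact ⟨hinj, (LinearMap.injective_iff_surjective_of_finrank_eq_finrank (by simp)).1 hinj⟩

end
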